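/- Let Λ be a symmetric positive definite d×d matrix, Y a d×q matrix, y an n×q matrix, and π₀ an n×d matrix. Define Λ' = Y Yᵀ + Λ⁻¹ and C = (y Yᵀ + π₀ Λ⁻¹)(Λ')⁻¹. Then y yᵀ + π₀ Λ⁻¹ π₀ᵀ − C Λ' Cᵀ = (y − π₀ Y)(I_q + Yᵀ Λ Y)⁻¹ (y − π₀ Y)ᵀ. -/
import Mathlib
open Matrix

theorem stmt4 {n d q : ℕ} (Λ : Matrix (Fin d) (Fin d) ℝ) (hΛ : Λ.PosDef)
    (Y : Matrix (Fin d) (Fin q) ℝ) (y : Matrix (Fin n) (Fin q) ℝ)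
    (π₀ : Matrix (Fin n) (Fin d) ℝ)
    (C : Matrix (Fin n) (Fin d) ℝ)
    (hC : C = (y * Yᵀ + π₀ * Λ⁻¹) * (Y * Yᵀ + Λ⁻¹)⁻¹) :
    y * yᵀ + π₀ * Λ⁻¹ * π₀ᵀ - C * (Y * Yᵀ + Λ⁻¹) * Cᵀ
      = (y - π₀ * Y) * (1 + Yᵀ * Λ * Y)⁻¹ * (y - π₀ * Y)ᵀ := by
  set A := Yᵀ * Λ * Y with hA
  set M := (1 + A)⁻¹ with hM
  have hΛt : Λᵀ = Λ := by simpa using congrArg Matrix.transpose hΛ.1.symm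
  have hΛdet : IsUnit Λ.det := isUnit_iff_ne_zero.mpr hΛ.det_pos.ne'
  have hiΛ : Λ⁻¹ * Λ = 1 := Matrix.nonsing_inv_mul _ hΛdet
  have hΛi : Λ * Λ⁻¹ = 1 := Matrix.mul_nonsing_inv _ hΛdet
  have hiΛt : (Λ⁻¹)ᵀ = Λ⁻¹ := by rw [Matrix.transpose_nonsing_inv, hΛt]
  have hBpd : (1 + A).PosDef := by
    have h1 : A.PosSemidef := by
      have := hΛ.posSemidef.conjTranspose_mul_mul_same Y
      simpa [hA] using this
    exact Matrix.PosDef.one.add_posSemidef h1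
  have hBdet : IsUnit (1 + A).det := isUnit_iff_ne_zero.mpr hBpd.det_pos.ne'
  have hBM : (1 + A) * M = 1 := Matrix.mul_nonsing_inv _ hBdet
  have hMB : M * (1 + A) = 1 := Matrix.nonsing_inv_mul _ hBdet
  have hAM : A * M = 1 - M := by
    have := hBM; rw [Matrix.add_mul, Matrix.one_mul] at this
    linear_combination (norm := abel) this
  have hMA : M * A = 1 - M := by
    have := hMB; rw [Matrix.mul_add, Matrix.mul_one] at this
    linear_combination (norm := abel) this
  have hAt : Aᵀ = A := by rw [hA]; simp [Matrix.transpose_mul, hΛt, Matrix.mul_assoc]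
  have hMt : Mᵀ = M := by
    rw [hM, Matrix.transpose_nonsing_inv]
    congr 1; simp [hAt]
  set S := Λ - Λ * Y * M * Yᵀ * Λ with hS
  have hSt : Sᵀ = S := by
    rw [hS]; simp [Matrix.transpose_sub, Matrix.transpose_mul, hΛt, hMt, Matrix.mul_assoc]
  have hkey : (Y * Yᵀ + Λ⁻¹) * S = 1 := by
    rw [hS]
    simp only [Matrix.mul_sub, Matrix.add_mul, Matrix.mul_assoc,
      Matrix.nonsing_inv_mul_cancel_left _ _ hΛdet, hiΛ]
    have e : Y * (Yᵀ * (Λ * (Y * (M * (Yᵀ * Λ))))) = Y * ((1 - M) * (Yᵀ * Λ)) := by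
      rw [← hAM, hA]; simp [Matrix.mul_assoc]
    rw [e]
    simp [Matrix.sub_mul, Matrix.mul_sub, Matrix.mul_assoc]
  have hinv : (Y * Yᵀ + Λ⁻¹)⁻¹ = S := Matrix.inv_eq_left_inv (by
    have := congrArg Matrix.transpose hkey
    simpa [Matrix.transpose_mul, Matrix.transpose_add, hSt, hiΛt, hΛt] using this)
  have hSkey : S * (Y * Yᵀ + Λ⁻¹) = 1 := by
    have := congrArg Matrix.transpose hkey
    simpa [Matrix.transpose_mul, Matrix.transpose_add, hSt, hiΛt] using this
  have hS1 : Yᵀ * S * Y = 1 - M := by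
    have e0 : Yᵀ * S * Y = A - A * M * A := by
      rw [hS, hA]; simp [Matrix.mul_sub, Matrix.sub_mul, Matrix.mul_assoc]
    rw [e0, hAM, Matrix.sub_mul, Matrix.one_mul, hMA]
    abel
  have hS2 : Yᵀ * S * Λ⁻¹ = M * Yᵀ := by
    have e0 : Yᵀ * S * Λ⁻¹ = Yᵀ * (Λ * Λ⁻¹) - Yᵀ * (Λ * (Y * (M * (Yᵀ * (Λ * Λ⁻¹))))) := by
      rw [hS]; simp [Matrix.mul_sub, Matrix.sub_mul, Matrix.mul_assoc]
    rw [e0, hΛi]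
    simp only [Matrix.mul_one]
    have e1 : Yᵀ * (Λ * (Y * (M * Yᵀ))) = A * M * Yᵀ := by
      rw [hA]; simp [Matrix.mul_assoc]
    rw [e1, hAM, Matrix.sub_mul, Matrix.one_mul]
    abel
  have hS3 : Λ⁻¹ * S * Y = Y * M := by
    have := congrArg Matrix.transpose hS2
    simpa [Matrix.transpose_mul, hSt, hiΛt, hMt, Matrix.mul_assoc] using this
  have hS4 : Λ⁻¹ * S * Λ⁻¹ = Λ⁻¹ - Y * M * Yᵀ := by
    have e0 : Λ⁻¹ * S * Λ⁻¹
        = Λ⁻¹ * (Λ * Λ⁻¹) - Λ⁻¹ * (Λ * (Y * (M * (Yᵀ * (Λ * Λ⁻¹))))) := by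
      rw [hS]; simp [Matrix.mul_sub, Matrix.sub_mul, Matrix.mul_assoc]
    rw [e0, hΛi]
    simp only [Matrix.mul_one]
    rw [Matrix.nonsing_inv_mul_cancel_left _ _ hΛdet]
    simp [Matrix.mul_assoc]
  subst hC
  rw [hinv]
  have hCc : ((y * Yᵀ + π₀ * Λ⁻¹) * S) * (Y * Yᵀ + Λ⁻¹) * (((y * Yᵀ + π₀ * Λ⁻¹) * S)ᵀ)
      = (y * Yᵀ + π₀ * Λ⁻¹) * S * (Y * yᵀ + Λ⁻¹ * π₀ᵀ) := by
    rw [Matrix.mul_assoc _ S, hSkey, Matrix.mul_one]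
    simp [Matrix.transpose_mul, Matrix.transpose_add, hSt, hiΛt, Matrix.mul_assoc, Matrix.mul_add]
  rw [hCc]
  have hE : (y * Yᵀ + π₀ * Λ⁻¹) * S * (Y * yᵀ + Λ⁻¹ * π₀ᵀ)
      = y * (Yᵀ * S * Y) * yᵀ + y * (Yᵀ * S * Λ⁻¹) * π₀ᵀ
        + (π₀ * (Λ⁻¹ * S * Y) * yᵀ + π₀ * (Λ⁻¹ * S * Λ⁻¹) * π₀ᵀ) := by
    simp only [Matrix.add_mul, Matrix.mul_add, Matrix.mul_assoc]
    abel
  rw [hE, hS1, hS2, hS3, hS4]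
  simp only [Matrix.sub_mul, Matrix.mul_sub, Matrix.one_mul, Matrix.mul_one,
    Matrix.add_mul, Matrix.mul_add, Matrix.transpose_sub, Matrix.transpose_mul,
    Matrix.mul_assoc]
  abel
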